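/- Let 0 < k < 1 and define h_k(z) = 1 − k² sin² z for z ∈ ℂ. Then h_k(z) = 0 if and only if z = (π/2 + nπ) ± i·arcosh(1/k) for some integer n. -/

import Mathlib

/-!
With `ρ = arcosh (1/k)` and `w = π/2 + iρ` one has `sin w = cosh ρ = 1/k`, so the zeros of
`1 - k² sin² z` are the solutions of `sin² z = sin² w`. Since `cos 2z = 1 - 2 sin² z`, this is
`cos 2z = cos 2w`, i.e. `z ≡ ±w (mod π)`; as `-w ≡ π/2 - iρ (mod π)` this is the claimed set.
-/

noncomputable def arcosh (x : ℝ) : ℝ := Real.log (x + Real.sqrt (x ^ 2 - 1))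

open Complex
open scoped Real

theorem arcosh_eq_real_arcosh : arcosh = Real.arcosh := rfl

namespace Complex

theorem sin_sq_eq_sin_sq_iff {z w : ℂ} :
    sin z ^ 2 = sin w ^ 2 ↔ ∃ m : ℤ, z = w + m * π ∨ z = -w + m * π := by
  have hcos : sin z ^ 2 = sin w ^ 2 ↔ cos (2 * w) = cos (2 * z) := by
    rw [cos_two_mul_eq_one_sub, cos_two_mul_eq_one_sub, sub_right_inj,
      mul_right_inj' two_ne_zero, eq_comm]
  rw [hcos, cos_eq_cos_iff]
  refine exists_congr fun m => or_congr ?_ ?_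
  · exact ⟨fun h => by linear_combination h / 2, fun h => by linear_combination 2 * h⟩
  · exact ⟨fun h => by linear_combination h / 2, fun h => by linear_combination 2 * h⟩

theorem sin_pi_div_two_add_mul_I (ρ : ℝ) : sin (π / 2 + ρ * I) = Real.cosh ρ := by
  rw [sin_add, sin_pi_div_two, cos_pi_div_two, cos_mul_I, ofReal_cosh]
  ring

end Complex

theorem Int.exists_or_iff_exists_or_add_one (P Q : ℤ → Prop) :
    (∃ m, P m ∨ Q m) ↔ ∃ n, P n ∨ Q (n + 1) := by
  constructor
  · rintro ⟨m, hP | hQ⟩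
    · exact ⟨m, .inl hP⟩
    · exact ⟨m - 1, .inr (by simpa using hQ)⟩
  · rintro ⟨n, hP | hQ⟩
    · exact ⟨n, .inl hP⟩
    · exact ⟨n + 1, .inr hQ⟩

theorem zeros_of_hk (k : ℝ) (h0 : 0 < k) (h1 : k < 1) (z : ℂ) :
    1 - (k : ℂ) ^ 2 * Complex.sin z ^ 2 = 0 ↔
      ∃ n : ℤ,
        z = ((Real.pi / 2 + n * Real.pi : ℝ) : ℂ) + (arcosh (1 / k) : ℝ) * Complex.I ∨
        z = ((Real.pi / 2 + n * Real.pi : ℝ) : ℂ) - (arcosh (1 / k) : ℝ) * Complex.I := by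
  have hρ : Real.cosh (arcosh (1 / k)) = 1 / k := by
    rw [arcosh_eq_real_arcosh, Real.cosh_arcosh (one_le_one_div h0 h1.le)]
  set ρ := arcosh (1 / k)
  have hk : (k : ℂ) ^ 2 ≠ 0 := by exact_mod_cast (pow_pos h0 2).ne'
  calc 1 - (k : ℂ) ^ 2 * sin z ^ 2 = 0
      ↔ sin z ^ 2 = sin (π / 2 + ρ * I) ^ 2 := by
        rw [sin_pi_div_two_add_mul_I, hρ, sub_eq_zero, eq_comm, ofReal_div, ofReal_one, div_pow,
          one_pow, eq_div_iff hk, mul_comm]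
    _ ↔ ∃ m : ℤ, z = π / 2 + ρ * I + m * π ∨ z = -(π / 2 + ρ * I) + m * π :=
        sin_sq_eq_sin_sq_iff
    _ ↔ _ := by
        rw [Int.exists_or_iff_exists_or_add_one]
        refine exists_congr fun n => or_congr ?_ ?_ <;> push_cast <;> ring_nf
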